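/- If the kernel H is radial (H(x,y) depends only on x−y), then the far-field matrix A defined by blocks Ã[t,s] (equal to G[t,s] = (H(ctr(t)+x̃_k, ctr(s)+x̃_l))_{k,l} when dist(t,s) > 0 and zero otherwise), with leaf cells of a perfect octree on a cube and the same translated equispaced interpolation grid in each leaf, satisfies A_{k,l} = A_{k', l'} whenever k − l = k' − l' (componentwise in the 6-dimensional multi-index), i.e., A is block-Toeplitz. -/

import Mathlib

/-- Center of the leaf cell with index `c` in the regular `2^E × 2^E × 2^E`
decomposition of the cube of radius `rB` centered at the origin. -/
noncomputable def cellCenter (rB : ℝ) (E : ℕ) (c : Fin 3 → Fin (2 ^ E)) :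
    Fin 3 → ℝ :=
  fun i => -rB + rB * (2 * ((c i : ℕ) : ℝ) + 1) / 2 ^ E

/-- The `a`-th node of the `L × L × L` equispaced interpolation grid, given as an
offset from the cell center (the same grid is used in every leaf, up to
translation). -/
noncomputable def gridNode (rB : ℝ) (E L : ℕ) (a : Fin 3 → Fin L) : Fin 3 → ℝ :=
  fun i => (rB / 2 ^ E) * (-1 + 2 * ((a i : ℕ) : ℝ) / ((L : ℝ) - 1))

/-!
A radial kernel only sees the displacement between two interpolation points. Since every leaf
is a translate of the same cell carrying the same grid, that displacement is an affine function
of the differences of cell indices and of node indices, and so is the adjacency test that zeroes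
the near-field blocks.
-/

lemma cellCenter_sub_cellCenter (rB : ℝ) (E : ℕ) (t s : Fin 3 → Fin (2 ^ E)) (i : Fin 3) :
    cellCenter rB E t i - cellCenter rB E s i =
      2 * rB / 2 ^ E * ((((t i : ℕ) : ℤ) - ((s i : ℕ) : ℤ) : ℤ) : ℝ) := by
  simp only [cellCenter]
  push_cast
  ring

lemma gridNode_sub_gridNode (rB : ℝ) (E L : ℕ) (a b : Fin 3 → Fin L) (i : Fin 3) :
    gridNode rB E L a i - gridNode rB E L b i =
      rB / 2 ^ E * (2 * ((((a i : ℕ) : ℤ) - ((b i : ℕ) : ℤ) : ℤ) : ℝ) / ((L : ℝ) - 1)) := by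
  simp only [gridNode]
  push_cast
  ring

theorem farfield_block_toeplitz_general (rB : ℝ) (E L : ℕ)
    (H : (Fin 3 → ℝ) → (Fin 3 → ℝ) → ℝ)
    (hrad : ∃ g : (Fin 3 → ℝ) → ℝ, ∀ x y, H x y = g (fun i => x i - y i))
    (A : Matrix ((Fin 3 → Fin (2 ^ E)) × (Fin 3 → Fin L))
                ((Fin 3 → Fin (2 ^ E)) × (Fin 3 → Fin L)) ℝ)
    (hA : ∀ (t s : Fin 3 → Fin (2 ^ E)) (a b : Fin 3 → Fin L),
      A (t, a) (s, b) =
        if ∀ i, |((t i : ℕ) : ℤ) - ((s i : ℕ) : ℤ)| ≤ 1 then 0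
        else H (fun i => cellCenter rB E t i + gridNode rB E L a i)
               (fun i => cellCenter rB E s i + gridNode rB E L b i))
    (t s t' s' : Fin 3 → Fin (2 ^ E)) (a b a' b' : Fin 3 → Fin L)
    (hcell : ∀ i, ((t i : ℕ) : ℤ) - ((s i : ℕ) : ℤ)
      = ((t' i : ℕ) : ℤ) - ((s' i : ℕ) : ℤ))
    (hnode : ∀ i, ((a i : ℕ) : ℤ) - ((b i : ℕ) : ℤ)
      = ((a' i : ℕ) : ℤ) - ((b' i : ℕ) : ℤ)) :
    A (t, a) (s, b) = A (t', a') (s', b') := by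
  obtain ⟨g, hg⟩ := hrad
  simp only [hA, hg, add_sub_add_comm, cellCenter_sub_cellCenter, gridNode_sub_gridNode,
    hcell, hnode]

/-- Theorem 4.1: if `H` is radial (depends only on `x - y`), then the far-field matrix
`A` — whose block `Ã[t,s]` equals `(H(ctr t + x̃_k, ctr s + x̃_l))_{k,l}` for
non-adjacent leaf cells and `0` for adjacent or equal cells — is block-Toeplitz:
`A_{k,l} = A_{k',l'}` whenever the componentwise 6-dimensional multi-index
differences agree. -/
theorem farfield_block_toeplitz (rB : ℝ) (hrB : 0 < rB) (E L : ℕ)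
    (H : (Fin 3 → ℝ) → (Fin 3 → ℝ) → ℝ)
    (hrad : ∃ g : (Fin 3 → ℝ) → ℝ, ∀ x y, H x y = g (fun i => x i - y i))
    (A : Matrix ((Fin 3 → Fin (2 ^ E)) × (Fin 3 → Fin L))
                ((Fin 3 → Fin (2 ^ E)) × (Fin 3 → Fin L)) ℝ)
    (hA : ∀ (t s : Fin 3 → Fin (2 ^ E)) (a b : Fin 3 → Fin L),
      A (t, a) (s, b) =
        if ∀ i, |((t i : ℕ) : ℤ) - ((s i : ℕ) : ℤ)| ≤ 1 then 0
        else H (fun i => cellCenter rB E t i + gridNode rB E L a i)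
               (fun i => cellCenter rB E s i + gridNode rB E L b i))
    (t s t' s' : Fin 3 → Fin (2 ^ E)) (a b a' b' : Fin 3 → Fin L)
    (hcell : ∀ i, ((t i : ℕ) : ℤ) - ((s i : ℕ) : ℤ)
      = ((t' i : ℕ) : ℤ) - ((s' i : ℕ) : ℤ))
    (hnode : ∀ i, ((a i : ℕ) : ℤ) - ((b i : ℕ) : ℤ)
      = ((a' i : ℕ) : ℤ) - ((b' i : ℕ) : ℤ)) :
    A (t, a) (s, b) = A (t', a') (s', b') :=
  farfield_block_toeplitz_general rB E L H hrad A hA t s t' s' a b a' b' hcell hnode
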